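/- Let k ≥ 1 be an integer, s ≥ 0 and α ∈ [0,1], and define f_α(x) = 1 − (1−α) g_{k,s}(x) with g_{k,s}(x) = ∑_{i=0}^{⌊s⌋} C(k,i) x^i (1−x)^{k−i}. Define the sequence h(0) = α and h(t+1) = f_α(h(t)) for t ≥ 0. Then the sequence (h(t))_{t≥0} is monotone nondecreasing and contained in [α,1]. -/

import Mathlib

/-!
The map `f x = 1 - (1 - α) g_{k,s}(x)` sends `[α, 1]` into itself because `0 ≤ g_{k,s} ≤ 1`
on `[0, 1]`, and it is monotone there because `g_{k,s}` is antitone: its derivative telescopes to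
`-k · C(k-1, ⌊s⌋) x^⌊s⌋ (1-x)^(k-1-⌊s⌋) ≤ 0`. Since `h 0 = α ≤ f α`, the orbit of `α` under a
monotone self-map of `[α, 1]` is nondecreasing.
-/

/-- `binCdf k s x = P(Bin(k,x) ≤ s) = ∑_{i=0}^{⌊s⌋} C(k,i) x^i (1-x)^{k-i}`,
the function `g_{k,s}(x)` of the paper. -/
noncomputable def binCdf (k : ℕ) (s : ℝ) (x : ℝ) : ℝ :=
  ∑ i ∈ Finset.range (⌊s⌋₊ + 1), (k.choose i : ℝ) * x ^ i * (1 - x) ^ (k - i)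

open Finset Polynomial

section Iteration

variable {β : Type*} {f : β → β} {S : Set β} {u : ℕ → β}

theorem Set.MapsTo.mem_of_succ_eq_map (hf : Set.MapsTo f S S) (h0 : u 0 ∈ S)
    (hu : ∀ n, u (n + 1) = f (u n)) (n : ℕ) : u n ∈ S := by
  induction n with
  | zero => exact h0
  | succ n ih => exact hu n ▸ hf ih

theorem MonotoneOn.monotone_of_succ_eq_map [Preorder β] (hmono : MonotoneOn f S)
    (hf : Set.MapsTo f S S) (h0 : u 0 ∈ S) (h01 : u 0 ≤ u 1) (hu : ∀ n, u (n + 1) = f (u n)) : Monotone u := by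
  have hmem := hf.mem_of_succ_eq_map h0 hu
  refine monotone_nat_of_le_succ fun n => ?_
  induction n with
  | zero => exact h01
  | succ n ih =>
    rw [hu n, hu (n + 1)]
    exact hmono (hmem n) (hmem (n + 1)) ih

end Iteration

namespace bernsteinPolynomial

theorem derivative_sum_range (R : Type*) [CommRing R] (n m : ℕ) :
    derivative (∑ ν ∈ range (m + 1), bernsteinPolynomial R n ν) =
      -n * bernsteinPolynomial R (n - 1) m := by
  induction m with
  | zero => simp [derivative_zero]
  | succ m ih =>
    rw [sum_range_succ, derivative_add, ih, derivative_succ]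
    ring

theorem eval_nonneg {R : Type*} [CommRing R] [PartialOrder R] [IsOrderedRing R] (n ν : ℕ)
    {x : R} (hx : x ∈ Set.Icc 0 1) : 0 ≤ (bernsteinPolynomial R n ν).eval x := by
  have h1x : 0 ≤ 1 - x := sub_nonneg.2 hx.2
  simp only [bernsteinPolynomial, eval_mul, eval_pow, eval_sub, eval_one, eval_X, eval_natCast]
  have hx0 : 0 ≤ x := hx.1
  positivity

end bernsteinPolynomial

theorem binCdf_eq_eval (k : ℕ) (s : ℝ) :
    binCdf k s = fun x => (∑ i ∈ range (⌊s⌋₊ + 1), bernsteinPolynomial ℝ k i).eval x := by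
  ext x
  simp [binCdf, bernsteinPolynomial, eval_finsetSum]

theorem binCdf_nonneg (k : ℕ) (s : ℝ) {x : ℝ} (hx : x ∈ Set.Icc 0 1) : 0 ≤ binCdf k s x := by
  simp only [binCdf_eq_eval, eval_finsetSum]
  exact sum_nonneg fun i _ => bernsteinPolynomial.eval_nonneg k i hx

theorem binCdf_zero_right (k : ℕ) (s : ℝ) : binCdf k s 0 = 1 := by
  simp [binCdf_eq_eval, eval_finsetSum, bernsteinPolynomial.eval_at_0]

theorem binCdf_antitoneOn (k : ℕ) (s : ℝ) : AntitoneOn (binCdf k s) (Set.Icc 0 1) := by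
  rw [binCdf_eq_eval]
  refine antitoneOn_of_deriv_nonpos (convex_Icc 0 1) (Polynomial.continuousOn _)
    (Polynomial.differentiableOn _) fun x hx => ?_
  rw [interior_Icc] at hx
  rw [Polynomial.deriv, bernsteinPolynomial.derivative_sum_range]
  simp only [eval_mul, eval_neg, eval_natCast, neg_mul, neg_nonpos]
  exact mul_nonneg (Nat.cast_nonneg k)
    (bernsteinPolynomial.eval_nonneg _ _ (Set.Ioo_subset_Icc_self hx))

theorem binCdf_le_one (k : ℕ) (s : ℝ) {x : ℝ} (hx : x ∈ Set.Icc 0 1) : binCdf k s x ≤ 1 :=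
  binCdf_zero_right k s ▸ binCdf_antitoneOn k s ⟨le_rfl, zero_le_one⟩ hx hx.1

theorem iterates_monotone_mem_Icc_general (k : ℕ) (s : ℝ)
    (α : ℝ) (hα : α ∈ Set.Icc (0 : ℝ) 1) (h : ℕ → ℝ) (h0 : h 0 = α)
    (hrec : ∀ t : ℕ, h (t + 1) = 1 - (1 - α) * binCdf k s (h t)) :
    Monotone h ∧ ∀ t : ℕ, h t ∈ Set.Icc α 1 := by
  set f : ℝ → ℝ := fun x => 1 - (1 - α) * binCdf k s x
  have h1α : 0 ≤ 1 - α := sub_nonneg.2 hα.2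
  have hunit : Set.Icc α 1 ⊆ Set.Icc 0 1 := Set.Icc_subset_Icc_left hα.1
  have hmaps : Set.MapsTo f (Set.Icc α 1) (Set.Icc α 1) := fun x hx => by
    have hg0 := binCdf_nonneg k s (hunit hx)
    have hg1 := binCdf_le_one k s (hunit hx)
    constructor <;> nlinarith
  have hmono : MonotoneOn f (Set.Icc α 1) := fun x hx y hy hxy => by
    have hg := binCdf_antitoneOn k s (hunit hx) (hunit hy) hxy
    simp only [f]
    gcongr
  have hαmem : α ∈ Set.Icc α 1 := Set.left_mem_Icc.2 hα.2
  have hmem0 : h 0 ∈ Set.Icc α 1 := by rwa [h0]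
  have h01 : h 0 ≤ h 1 := by
    rw [hrec 0, h0]
    exact (hmaps hαmem).1
  exact ⟨hmono.monotone_of_succ_eq_map hmaps hmem0 h01 hrec,
    hmaps.mem_of_succ_eq_map hmem0 hrec⟩

/-- The iterates `h(0) = α`, `h(t+1) = 1 − (1−α) g_{k,s}(h(t))` form a monotone
nondecreasing sequence contained in `[α,1]`. -/
theorem iterates_monotone_mem_Icc (k : ℕ) (hk : 1 ≤ k) (s : ℝ) (hs : 0 ≤ s)
    (α : ℝ) (hα : α ∈ Set.Icc (0 : ℝ) 1) (h : ℕ → ℝ) (h0 : h 0 = α)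
    (hrec : ∀ t : ℕ, h (t + 1) = 1 - (1 - α) * binCdf k s (h t)) :
    Monotone h ∧ ∀ t : ℕ, h t ∈ Set.Icc α 1 :=
  iterates_monotone_mem_Icc_general k s α hα h h0 hrec
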